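/- Let m ≥ 3 and 0 < w < 1. Define the Bessel kernel k_w(x) = Γ(w/2)^{-1} ∫_0^∞ e^{-t} t^{(w-2)/2} K_t(x) dt for x ∈ ℝ^m \ {0}, where K_t(x) = (4πt)^{-m/2} e^{-|x|²/(4t)}. Then k_w(x) is finite and positive for x ≠ 0, and there is a constant C_w depending only on m and w such that k_w(x) ≤ C_w e^{-|x|/2} |x|^{-(m-w)} for all x ≠ 0. -/

import Mathlib

open MeasureTheory

/-- The Gaussian heat kernel `K_t(x) = (4πt)^{-m/2} e^{-|x|²/(4t)}` on `ℝ^m`. -/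
noncomputable def heatKernel (m : ℕ) (t : ℝ) (x : EuclideanSpace ℝ (Fin m)) : ℝ :=
  (4 * Real.pi * t) ^ (-(m : ℝ) / 2) * Real.exp (-‖x‖ ^ 2 / (4 * t))

/-- The Bessel kernel `k_w(x) = Γ(w/2)⁻¹ ∫_0^∞ e^{-t} t^{(w-2)/2} K_t(x) dt`. -/
noncomputable def besselKernel (m : ℕ) (w : ℝ) (x : EuclideanSpace ℝ (Fin m)) : ℝ :=
  (Real.Gamma (w / 2))⁻¹ *
    ∫ t in Set.Ioi (0:ℝ), Real.exp (-t) * t ^ ((w - 2) / 2) * heatKernel m t x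

/-!
The AM-GM inequality `t + |x|²/(8t) ≥ |x|/2` splits the heat-kernel exponent as
`e^{-t} e^{-|x|²/(4t)} ≤ e^{-|x|/2} e^{-|x|²/(8t)}`. What remains is, up to constants,
`∫_0^∞ t^{-a-1} e^{-c/t} dt` with `a = (m-w)/2` and `c = |x|²/8`, which the substitution
`t ↦ 1/t` turns into the Gamma integral `c^{-a} Γ(a)`; since `c^{-a}` is a multiple of
`|x|^{-(m-w)}`, this gives the bound.
-/

open Set Real

section InverseGamma

variable {a c : ℝ}

-- The integrand of `integral_comp_rpow_Ioi` for the substitution `y = t ^ (-1)`.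
lemma inv_subst_rpow_mul_exp_neg_mul {t : ℝ} (ht : 0 < t) :
    (|(-1 : ℝ)| * t ^ ((-1 : ℝ) - 1)) •
        ((t ^ (-1 : ℝ)) ^ (a - 1) * exp (-(c * t ^ (-1 : ℝ)))) =
      t ^ (-a - 1) * exp (-(c / t)) := by
  simp only [abs_neg, abs_one, one_mul, smul_eq_mul, rpow_neg_one]
  rw [inv_rpow ht.le, ← rpow_neg ht.le, ← mul_assoc, ← rpow_add ht, ← div_eq_mul_inv]
  ring_nf

lemma integrableOn_rpow_mul_exp_neg_div_Ioi (ha : 0 < a) (hc : 0 < c) :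
    IntegrableOn (fun t : ℝ => t ^ (-a - 1) * exp (-(c / t))) (Ioi 0) := by
  have hGamma : IntegrableOn (fun y : ℝ => y ^ (a - 1) * exp (-(c * y))) (Ioi 0) := by
    simpa only [rpow_one, neg_mul] using
      integrableOn_rpow_mul_exp_neg_mul_rpow (p := 1) (by linarith) one_pos hc
  refine (integrableOn_congr_fun (fun t ht => inv_subst_rpow_mul_exp_neg_mul ht)
    measurableSet_Ioi).mp ?_
  exact (integrableOn_Ioi_comp_rpow_iff _ (by norm_num)).mpr hGamma

lemma integral_rpow_mul_exp_neg_div_Ioi (ha : 0 < a) (hc : 0 < c) :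
    ∫ t in Ioi (0 : ℝ), t ^ (-a - 1) * exp (-(c / t)) = c ^ (-a) * Gamma a := by
  rw [← setIntegral_congr_fun measurableSet_Ioi (fun t ht => inv_subst_rpow_mul_exp_neg_mul ht),
    integral_comp_rpow_Ioi (fun y => y ^ (a - 1) * exp (-(c * y))) (by norm_num),
    integral_rpow_mul_exp_neg_mul_Ioi ha hc, one_div, ← rpow_neg_one c, ← rpow_mul hc.le]
  norm_num

end InverseGamma

lemma neg_sub_sq_div_le {t : ℝ} (ht : 0 < t) (r : ℝ) :
    -t - r ^ 2 / (4 * t) ≤ -r / 2 - r ^ 2 / 8 / t := by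
  have hquarter : r ^ 2 / (4 * t) * (4 * t) = r ^ 2 := by field_simp
  have heighth : r ^ 2 / 8 / t * t = r ^ 2 / 8 := by field_simp
  nlinarith [sq_nonneg (t - r / 4)]

lemma heatKernel_pos (m : ℕ) {t : ℝ} (ht : 0 < t) (x : EuclideanSpace ℝ (Fin m)) :
    0 < heatKernel m t x := by
  unfold heatKernel
  positivity

noncomputable def besselIntegrand (m : ℕ) (w : ℝ) (x : EuclideanSpace ℝ (Fin m)) (t : ℝ) :
    ℝ :=
  exp (-t) * t ^ ((w - 2) / 2) * heatKernel m t x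

section BesselIntegrand

variable {m : ℕ} {w : ℝ} {x : EuclideanSpace ℝ (Fin m)}

lemma besselIntegrand_pos {t : ℝ} (ht : 0 < t) : 0 < besselIntegrand m w x t := by
  unfold besselIntegrand
  have := heatKernel_pos m ht x
  positivity

lemma besselIntegrand_le {t : ℝ} (ht : 0 < t) :
    besselIntegrand m w x t ≤ (4 * π) ^ (-(m : ℝ) / 2) * exp (-‖x‖ / 2) *
      (t ^ (-((m - w) / 2) - 1) * exp (-(‖x‖ ^ 2 / 8 / t))) := by
  have hpow : t ^ ((w - 2) / 2) * t ^ (-(m : ℝ) / 2) = t ^ (-((m - w) / 2) - 1) := by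
    rw [← rpow_add ht]
    ring_nf
  have hexp : exp (-t) * exp (-‖x‖ ^ 2 / (4 * t)) ≤
      exp (-‖x‖ / 2) * exp (-(‖x‖ ^ 2 / 8 / t)) := by
    rw [← exp_add, ← exp_add, exp_le_exp, neg_div]
    linarith [neg_sub_sq_div_le ht ‖x‖]
  calc besselIntegrand m w x t
      = (4 * π) ^ (-(m : ℝ) / 2) * t ^ (-((m - w) / 2) - 1) *
          (exp (-t) * exp (-‖x‖ ^ 2 / (4 * t))) := by
        rw [besselIntegrand, heatKernel, mul_rpow (by positivity) ht.le, ← hpow]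
        ring
    _ ≤ (4 * π) ^ (-(m : ℝ) / 2) * t ^ (-((m - w) / 2) - 1) *
          (exp (-‖x‖ / 2) * exp (-(‖x‖ ^ 2 / 8 / t))) := by gcongr
    _ = _ := by ring

variable (hx : x ≠ 0) (hwm : w < m)
include hx hwm

lemma integrableOn_besselIntegrand : IntegrableOn (besselIntegrand m w x) (Ioi 0) := by
  have hbound := ((integrableOn_rpow_mul_exp_neg_div_Ioi (a := (m - w) / 2) (c := ‖x‖ ^ 2 / 8)
    (by linarith) (by positivity [norm_pos_iff.mpr hx])).const_mul
      ((4 * π) ^ (-(m : ℝ) / 2) * exp (-‖x‖ / 2)))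
  refine hbound.mono' (by unfold besselIntegrand heatKernel; fun_prop) ?_
  filter_upwards [ae_restrict_mem measurableSet_Ioi] with t ht
  rw [norm_of_nonneg (besselIntegrand_pos ht).le]
  exact besselIntegrand_le ht

lemma integral_besselIntegrand_pos : 0 < ∫ t in Ioi (0 : ℝ), besselIntegrand m w x t := by
  rw [setIntegral_pos_iff_support_of_nonneg_ae
    (ae_restrict_of_forall_mem measurableSet_Ioi fun t ht => (besselIntegrand_pos ht).le)
    (integrableOn_besselIntegrand hx hwm)]
  have hsupport : Ioi 0 ⊆ Function.support (besselIntegrand m w x) ∩ Ioi 0 :=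
    fun t ht => ⟨(besselIntegrand_pos ht).ne', ht⟩
  exact (by simp : (0 : ENNReal) < volume (Ioi (0 : ℝ))).trans_le (measure_mono hsupport)

lemma integral_besselIntegrand_le :
    ∫ t in Ioi (0 : ℝ), besselIntegrand m w x t ≤
      (4 * π) ^ (-(m : ℝ) / 2) * (8 ^ ((m - w) / 2) * Gamma ((m - w) / 2)) *
        exp (-‖x‖ / 2) * ‖x‖ ^ (-((m : ℝ) - w)) := by
  have hr : 0 < ‖x‖ := norm_pos_iff.mpr hx
  have ha : 0 < ((m : ℝ) - w) / 2 := by linarith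
  have hc : 0 < ‖x‖ ^ 2 / 8 := by positivity
  have hscale : (‖x‖ ^ 2 / 8) ^ (-(((m : ℝ) - w) / 2)) =
      8 ^ (((m : ℝ) - w) / 2) * ‖x‖ ^ (-((m : ℝ) - w)) := by
    rw [div_rpow (by positivity) (by norm_num), ← rpow_natCast ‖x‖ 2, ← rpow_mul hr.le,
      rpow_neg (by norm_num : (0 : ℝ) ≤ 8), div_eq_mul_inv, inv_inv, mul_comm]
    ring_nf
  calc ∫ t in Ioi (0 : ℝ), besselIntegrand m w x t
      ≤ ∫ t in Ioi (0 : ℝ), (4 * π) ^ (-(m : ℝ) / 2) * exp (-‖x‖ / 2) *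
          (t ^ (-((m - w) / 2) - 1) * exp (-(‖x‖ ^ 2 / 8 / t))) :=
        setIntegral_mono_on (integrableOn_besselIntegrand hx hwm)
          ((integrableOn_rpow_mul_exp_neg_div_Ioi ha hc).const_mul _) measurableSet_Ioi
          fun t ht => besselIntegrand_le ht
    _ = _ := by
        rw [integral_const_mul, integral_rpow_mul_exp_neg_div_Ioi ha hc, hscale]
        ring

end BesselIntegrand

/-- for `m ≥ 3` and `0 < w < 1`, `k_w(x)` is finite (the defining
integral converges) and positive for `x ≠ 0`, and there is a constant `C_w` with
`k_w(x) ≤ C_w e^{-|x|/2} |x|^{-(m-w)}` for all `x ≠ 0`. -/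
theorem stmt13 (m : ℕ) (hm : 3 ≤ m) (w : ℝ) (hw0 : 0 < w) (hw1 : w < 1) :
    (∀ x : EuclideanSpace ℝ (Fin m), x ≠ 0 →
      IntegrableOn (fun t : ℝ => Real.exp (-t) * t ^ ((w - 2) / 2) * heatKernel m t x)
        (Set.Ioi 0) volume ∧ 0 < besselKernel m w x) ∧
    ∃ C : ℝ, 0 < C ∧ ∀ x : EuclideanSpace ℝ (Fin m), x ≠ 0 →
      besselKernel m w x ≤ C * Real.exp (-‖x‖ / 2) * ‖x‖ ^ (-((m : ℝ) - w)) := by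
  have hwm : w < m := by
    have : (3 : ℝ) ≤ m := by exact_mod_cast hm
    linarith
  have hGamma_w : 0 < Gamma (w / 2) := Gamma_pos_of_pos (by linarith)
  have hGamma_a : 0 < Gamma ((m - w) / 2) := Gamma_pos_of_pos (by linarith)
  set A := (4 * π) ^ (-(m : ℝ) / 2) * (8 ^ ((m - w) / 2) * Gamma ((m - w) / 2))
  refine ⟨fun x hx => ⟨integrableOn_besselIntegrand hx hwm,
    mul_pos (inv_pos.mpr hGamma_w) (integral_besselIntegrand_pos hx hwm)⟩,
    (Gamma (w / 2))⁻¹ * A, by positivity, fun x hx => ?_⟩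
  calc besselKernel m w x
      ≤ (Gamma (w / 2))⁻¹ * (A * exp (-‖x‖ / 2) * ‖x‖ ^ (-((m : ℝ) - w))) :=
        mul_le_mul_of_nonneg_left (integral_besselIntegrand_le hx hwm) (inv_pos.mpr hGamma_w).le
    _ = _ := by ring
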